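/- Let q be a prime power and F a (q+1)-graph with a single edge e. Define the q-augmentation e^{+q} as the (q+1)-graph obtained from the q-blowup e(q) of e (each vertex x replaced by q copies x₁,…,x_q, each edge by all q^{q+1} transversal edges) by adding one new vertex v and all edges {v} ∪ {x₁,…,x_q} for x ∈ e. Then PG₂(q) is a subhypergraph of e^{+q}: there is an injective map from the points of PG₂(q) into the vertices of e^{+q} carrying each line of PG₂(q) to an edge of e^{+q}. -/

import Mathlib

open scoped LinearAlgebra.Projectivization

/-- The set of points on the line through two points. -/
def lineThrough {K V : Type*} [DivisionRing K] [AddCommGroup V] [Module K V]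
    (a b : ℙ K V) : Set (ℙ K V) :=
  {c | c.submodule ≤ a.submodule ⊔ b.submodule}

/-- `L` is a line of the projective plane `ℙ K V`. -/
def IsLine {K V : Type*} [DivisionRing K] [AddCommGroup V] [Module K V]
    (L : Set (ℙ K V)) : Prop :=
  ∃ a b : ℙ K V, a ≠ b ∧ L = lineThrough a b

/-!
Fix a point `p` of `ℙ(K³)` and a complement `H` of the subspace `p` of `K³`. Every point other
than `p` is `[d + z • p]` for a unique pair of a point `[d]` of `ℙ(H)` (one of the `q + 1` lines
through `p`, with a fixed representative `d`) and a scalar `z`, so the points of `PG₂(q)` are in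
bijection with `Option (ℙ(H) × K)`, that is, with the vertices of `e^{+q}`. A line through `p`
consists of `p` and the `q` points with one fixed `[d]`: a star edge. A line (plane `W ⊆ K³`)
missing `p` is a complement of `p`, so for each `[d]` exactly one `z` has `d + z • p ∈ W`: a
transversal edge.
-/

theorem Finset.image_equiv_eq_of_symm_mem_iff {α β : Type*} [DecidableEq β] (Φ : α ≃ β)
    {s : Finset α} {t : Finset β} (h : ∀ y, Φ.symm y ∈ s ↔ y ∈ t) : s.image Φ = t := by
  ext y
  rw [← h, ← Equiv.coe_toEmbedding, ← Finset.map_eq_image, Finset.mem_map_equiv]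

namespace Projectivization

open Module

variable {K V : Type*} [Field K] [AddCommGroup V] [Module K V]

theorem lineThrough_eq_projectivization (a b : ℙ K V) :
    lineThrough a b = ((a.submodule ⊔ b.submodule).projectivization : Set (ℙ K V)) :=
  Set.ext fun c => (Submodule.mem_projectivization_iff_submodule_le _ c).symm

theorem finrank_submodule_sup_submodule {a b : ℙ K V} (hab : a ≠ b) :
    finrank K ↥(a.submodule ⊔ b.submodule) = 2 := by
  rw [submodule_eq, submodule_eq, ← Submodule.span_insert, ← Matrix.range_cons_cons_empty _ _ ![],
    finrank_span_eq_card (linearIndependent_pair_iff_ne.2 hab), Fintype.card_fin]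

theorem isCompl_submodule_of_notMem [FiniteDimensional K V] {W : Submodule K V}
    (hW : finrank K V ≤ finrank K W + 1) {p : ℙ K V} (hp : p ∉ W.projectivization) :
    IsCompl W p.submodule := by
  rw [Submodule.isCompl_iff_disjoint _ _ (by rwa [finrank_submodule]), submodule_eq]
  rw [← p.mk_rep, Submodule.mk_mem_projectivization_iff] at hp
  exact Submodule.disjoint_span_singleton_of_notMem hp

section Decomposition

variable {U : Submodule K V} {p : ℙ K V}

theorem eq_and_eq_of_add_smul_rep_eq (hU : Disjoint U p.submodule) {u u' : V} (hu : u ∈ U)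
    (hu' : u' ∈ U) {z z' : K} (h : u + z • p.rep = u' + z' • p.rep) : u = u' ∧ z = z' := by
  have hmem : u - u' ∈ p.submodule := by
    rw [submodule_eq, show u - u' = (z' - z) • p.rep by linear_combination (norm := module) h]
    exact Submodule.smul_mem _ _ (Submodule.mem_span_singleton_self _)
  obtain rfl : u = u' := sub_eq_zero.1 (Submodule.disjoint_def.1 hU _ (U.sub_mem hu hu') hmem)
  exact ⟨rfl, smul_left_injective K p.rep_nonzero (add_left_cancel h)⟩

theorem exists_add_smul_rep_eq (hU : Codisjoint U p.submodule) (v : V) :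
    ∃ u ∈ U, ∃ z : K, u + z • p.rep = v := by
  obtain ⟨u, hu, w, hw, rfl⟩ :=
    Submodule.mem_sup.1 (codisjoint_iff.1 hU ▸ Submodule.mem_top (x := v))
  obtain ⟨z, rfl⟩ := Submodule.mem_span_singleton.1 (p.submodule_eq ▸ hw)
  exact ⟨u, hu, z, rfl⟩

theorem existsUnique_add_smul_rep_mem (hU : IsCompl U p.submodule) (v : V) :
    ∃! z : K, v + z • p.rep ∈ U := by
  obtain ⟨u, hu, c, rfl⟩ := exists_add_smul_rep_eq hU.codisjoint v
  refine ⟨-c, by simpa [add_assoc, ← add_smul] using hu, fun z hz => ?_⟩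
  have := (eq_and_eq_of_add_smul_rep_eq hU.disjoint hz hu (z := -(c + z)) (z' := 0)
    (by linear_combination (norm := module))).2
  linear_combination -this

end Decomposition

section Pencil

variable {H : Submodule K V} {p : ℙ K V}

theorem coe_add_smul_rep_ne_zero (hH : Disjoint H p.submodule) {h : H} (hh : h ≠ 0) (z : K) :
    (h : V) + z • p.rep ≠ 0 := fun h0 =>
  hh <| Subtype.ext
    (eq_and_eq_of_add_smul_rep_eq hH h.2 H.zero_mem (z' := 0) (by simpa using h0)).1

noncomputable def ofPencilCoord (hH : IsCompl H p.submodule) : Option (ℙ K H × K) → ℙ K V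
  | none => p
  | some (d, z) =>
    mk K ((d.rep : V) + z • p.rep) (coe_add_smul_rep_ne_zero hH.disjoint d.rep_nonzero z)

variable (hH : IsCompl H p.submodule)

@[simp]
theorem ofPencilCoord_none : ofPencilCoord hH none = p :=
  rfl

@[simp]
theorem ofPencilCoord_some_mem_iff {W : Submodule K V} (d : ℙ K H) (z : K) :
    ofPencilCoord hH (some (d, z)) ∈ W.projectivization ↔ (d.rep : V) + z • p.rep ∈ W :=
  Iff.rfl

theorem ofPencilCoord_some_ne (d : ℙ K H) (z : K) : ofPencilCoord hH (some (d, z)) ≠ p := by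
  intro h
  obtain ⟨a, ha⟩ := (mk_eq_mk_iff' K _ _ _ _).1 (h.trans p.mk_rep.symm)
  exact d.rep_nonzero <| Subtype.ext
    (eq_and_eq_of_add_smul_rep_eq hH.disjoint d.rep.2 H.zero_mem (z := z) (z' := a)
      (by rw [zero_add, ha])).1

theorem ofPencilCoord_injective : Function.Injective (ofPencilCoord hH) := by
  rintro (_ | ⟨d, z⟩) (_ | ⟨d', z'⟩) h
  · rfl
  · exact (ofPencilCoord_some_ne hH d' z' h.symm).elim
  · exact (ofPencilCoord_some_ne hH d z h).elim
  obtain ⟨a, ha⟩ := (mk_eq_mk_iff' K _ _ _ _).1 h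
  obtain ⟨hd, hz⟩ := eq_and_eq_of_add_smul_rep_eq hH.disjoint (a • d'.rep).2 d.rep.2
    (z := a * z') (by rw [← ha]; simp [smul_add, smul_smul])
  obtain rfl : d = d' := by
    rw [← d.mk_rep, ← d'.mk_rep, mk_eq_mk_iff']
    exact ⟨a, Subtype.ext hd⟩
  obtain rfl : a = 1 :=
    smul_left_injective K d.rep_nonzero ((Subtype.ext hd).trans (one_smul K _).symm)
  rw [← hz, one_mul]

theorem ofPencilCoord_surjective : Function.Surjective (ofPencilCoord hH) := by
  intro P
  obtain ⟨u, hu, c, hP⟩ := exists_add_smul_rep_eq hH.codisjoint P.rep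
  rcases eq_or_ne u 0 with rfl | hu0
  · refine ⟨none, Eq.symm ?_⟩
    show P = p
    rw [← P.mk_rep, ← p.mk_rep, mk_eq_mk_iff']
    exact ⟨c, by simpa using hP⟩
  · have hu0' : (⟨u, hu⟩ : H) ≠ 0 := by simpa using hu0
    obtain ⟨a, ha⟩ := exists_smul_eq_mk_rep K _ hu0'
    refine ⟨some (mk K _ hu0', a * c), ?_⟩
    conv_rhs => rw [← P.mk_rep]
    refine (mk_eq_mk_iff' K _ _ _ _).2 ⟨a, ?_⟩
    rw [← ha, ← hP]
    simp [smul_add, smul_smul, Units.smul_def]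

theorem linearIndependent_coe_rep (hH : Disjoint H p.submodule) {h : H} (hh : h ≠ 0) :
    LinearIndependent K ![(h : V), p.rep] := by
  rw [LinearIndependent.pair_iff]
  intro s t hst
  obtain ⟨hs, ht⟩ := eq_and_eq_of_add_smul_rep_eq hH (s • h).2 H.zero_mem (z' := 0)
    (by simpa using hst)
  exact ⟨(smul_eq_zero.1 (Subtype.ext hs : s • h = 0)).resolve_right hh, ht⟩

noncomputable def pencilEquiv : Option (ℙ K H × K) ≃ ℙ K V :=
  Equiv.ofBijective _ ⟨ofPencilCoord_injective hH, ofPencilCoord_surjective hH⟩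

@[simp]
theorem pencilEquiv_apply (x : Option (ℙ K H × K)) : pencilEquiv hH x = ofPencilCoord hH x :=
  rfl

theorem ofPencilCoord_mem_iff_of_mem {W : Submodule K V} (hW : finrank K W = 2)
    (hpW : p ∈ W.projectivization) {d₀ : ℙ K H} {z₀ : K}
    (h₀ : ofPencilCoord hH (some (d₀, z₀)) ∈ W.projectivization) (d : ℙ K H) (z : K) :
    ofPencilCoord hH (some (d, z)) ∈ W.projectivization ↔ d = d₀ := by
  rw [← p.mk_rep, Submodule.mk_mem_projectivization_iff] at hpW
  rw [ofPencilCoord_some_mem_iff] at h₀ ⊢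
  have hd₀ : (d₀.rep : V) ∈ W := (W.add_mem_iff_left (W.smul_mem z₀ hpW)).1 h₀
  have hW' : W = Submodule.span K {(d₀.rep : V), p.rep} :=
    line_unique' (by simpa using d₀.rep_nonzero) p.rep_nonzero
      (linearIndependent_coe_rep hH.disjoint d₀.rep_nonzero) W hW hd₀ hpW
  refine ⟨fun h => ?_, fun h => h ▸ W.add_mem hd₀ (W.smul_mem z hpW)⟩
  obtain ⟨α, β, hαβ⟩ := Submodule.mem_span_pair.1 (hW' ▸ h)
  have hα := (eq_and_eq_of_add_smul_rep_eq hH.disjoint (α • d₀.rep).2 d.rep.2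
    (by simpa using hαβ)).1
  rw [← d.mk_rep, ← d₀.mk_rep, mk_eq_mk_iff']
  exact ⟨α, Subtype.ext hα⟩

theorem exists_ofPencilCoord_mem_iff {W : Submodule K V} (hW : IsCompl W p.submodule) :
    ∃ f : ℙ K H → K, ∀ d z, ofPencilCoord hH (some (d, z)) ∈ W.projectivization ↔ f d = z := by
  choose f hf using fun d : ℙ K H => existsUnique_add_smul_rep_mem hW (d.rep : V)
  exact ⟨f, fun d z => ⟨fun h => ((hf d).2 z h).symm, fun h => h ▸ (hf d).1⟩⟩

theorem lineThrough_pencil_cases [FiniteDimensional K V] (hV : finrank K V = 3) {a b : ℙ K V}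
    (hab : a ≠ b) :
    (p ∈ lineThrough a b ∧
      ∃ d₀, ∀ d z, ofPencilCoord hH (some (d, z)) ∈ lineThrough a b ↔ d = d₀) ∨
    (p ∉ lineThrough a b ∧
      ∃ f : ℙ K H → K, ∀ d z, ofPencilCoord hH (some (d, z)) ∈ lineThrough a b ↔ f d = z) := by
  have hW := finrank_submodule_sup_submodule hab
  simp only [lineThrough_eq_projectivization, SetLike.mem_coe]
  by_cases hp : p ∈ (a.submodule ⊔ b.submodule).projectivization
  · obtain ⟨c, hc, hcp⟩ : ∃ c ∈ (a.submodule ⊔ b.submodule).projectivization, c ≠ p := by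
      simp only [Submodule.mem_projectivization_iff_submodule_le]
      rcases eq_or_ne a p with rfl | hap
      · exact ⟨b, le_sup_right, hab.symm⟩
      · exact ⟨a, le_sup_left, hap⟩
    obtain ⟨_ | ⟨d₀, z₀⟩, rfl⟩ := ofPencilCoord_surjective hH c
    · exact (hcp rfl).elim
    · exact Or.inl ⟨hp, d₀, ofPencilCoord_mem_iff_of_mem hH hW hp hc⟩
  · exact Or.inr ⟨hp, exists_ofPencilCoord_mem_iff hH
      (isCompl_submodule_of_notMem (by rw [hV, hW]) hp)⟩

end Pencil

end Projectivization

/-- `PG₂(q)` is a subhypergraph of the `q`-augmentation `e^{+q}` of a single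
`(q+1)`-edge `e`: the vertices of `e^{+q}` are the `q(q+1)` clones
`(j, i) : Fin (q+1) × Fin q` together with one extra vertex, and its edges are
the transversal edges `{(j, f j) : j}` of the blowup together with the star
edges `{v} ∪ {(x, i) : i}`. There is an injection of the points of `PG₂(q)`
(over a finite field `K` with `|K| = q`) into these vertices carrying every
line of `PG₂(q)` to an edge of `e^{+q}`. -/
theorem pg2_subset_augmented_edge (q : ℕ) (K : Type*) [Field K] [Fintype K]
    (hK : Fintype.card K = q) :
    ∃ φ : ℙ K (Fin 3 → K) → (Fin (q + 1) × Fin q) ⊕ Unit,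
      Function.Injective φ ∧
      ∀ L : Finset (ℙ K (Fin 3 → K)), IsLine (↑L : Set (ℙ K (Fin 3 → K))) →
        (∃ f : Fin (q + 1) → Fin q,
          L.image φ = Finset.image
            (fun j => (Sum.inl (j, f j) : (Fin (q + 1) × Fin q) ⊕ Unit))
            Finset.univ) ∨
        (∃ x : Fin (q + 1),
          L.image φ = insert (Sum.inr () : (Fin (q + 1) × Fin q) ⊕ Unit)
            (Finset.image
              (fun i => (Sum.inl (x, i) : (Fin (q + 1) × Fin q) ⊕ Unit))
              Finset.univ)) := by
  classical
  obtain ⟨p⟩ : Nonempty (ℙ K (Fin 3 → K)) := inferInstance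
  obtain ⟨H, hH⟩ := p.submodule.exists_isCompl
  replace hH := hH.symm
  have hcard : Nat.card (ℙ K H) = q + 1 := by
    have := Submodule.finrank_add_eq_of_isCompl hH
    rw [Projectivization.finrank_submodule, Module.finrank_fin_fun] at this
    rw [Projectivization.card_of_finrank_two K H (by omega), Nat.card_eq_fintype_card, hK]
  let eD := Finite.equivFinOfCardEq hcard
  let eK := Fintype.equivFinOfCardEq hK
  let Φ : ℙ K (Fin 3 → K) ≃ (Fin (q + 1) × Fin q) ⊕ Unit :=
    (Projectivization.pencilEquiv hH).symm.trans
      ((Equiv.optionEquivSumPUnit _).trans (Equiv.sumCongr (eD.prodCongr eK) (Equiv.refl _)))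
  refine ⟨Φ, Φ.injective, fun L ⟨a, b, hab, hL⟩ => ?_⟩
  have hmem : ∀ P, P ∈ L ↔ P ∈ lineThrough a b := fun P => by rw [← Finset.mem_coe, hL]
  rcases Projectivization.lineThrough_pencil_cases hH (Module.finrank_fin_fun K) hab with
    ⟨hp, d₀, hd₀⟩ | ⟨hp, f, hf⟩
  · refine Or.inr ⟨eD d₀, Finset.image_equiv_eq_of_symm_mem_iff Φ ?_⟩
    rintro (⟨j, i⟩ | ⟨⟩)
    · simpa [Φ, hmem, hd₀] using eD.symm_apply_eq.trans eq_comm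
    · simpa [Φ, hmem] using hp
  · refine Or.inl ⟨eK ∘ f ∘ eD.symm, Finset.image_equiv_eq_of_symm_mem_iff Φ ?_⟩
    rintro (⟨j, i⟩ | ⟨⟩)
    · simpa [Φ, hmem, hf] using eK.eq_symm_apply
    · simpa [Φ, hmem] using hp
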